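/- Fix θ ∈ ℝ and let 𝓛_θ be the linear map on M₂(ℂ) given by 𝓛_θ(ρ) = (1/2) Σ_{i,j=1}^{3} A(θ)_{ij} ([σᵢ, ρ σⱼ] + [σᵢ ρ, σⱼ]), where A(θ) = [[cos²θ, i cosθ sinθ, 0], [−i cosθ sinθ, sin²θ, 0], [0,0,0]]. Let G₁ = (1/√2)·1, G₂ = (1/√2)σ₁, G₃ = (1/√2)σ₂, G₄ = (1/√2)σ₃. Then the 4×4 matrix L with entries L_{ab} = tr(G_a† · 𝓛_θ(G_b)) equals [[0,0,0,0], [0, −2 sin²θ, 0, 0], [0, 0, −2 cos²θ, 0], [−4 cosθ sinθ, 0, 0, −2]]. -/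
import Mathlib


open Matrix

/-- The Pauli matrices `σ₁, σ₂, σ₃` as elements of `M₂(ℂ)`. -/
noncomputable def pauli : Fin 3 → Matrix (Fin 2) (Fin 2) ℂ :=
  ![!![0, 1; 1, 0], !![0, -Complex.I; Complex.I, 0], !![1, 0; 0, -1]]

/-- The GKS matrix `A(θ) = [[cos²θ, i cosθ sinθ, 0], [−i cosθ sinθ, sin²θ, 0], [0,0,0]]`. -/
noncomputable def gksMatrixTheta (θ : ℝ) : Matrix (Fin 3) (Fin 3) ℂ :=
  !![(Real.cos θ : ℂ) ^ 2, Complex.I * (Real.cos θ : ℂ) * (Real.sin θ : ℂ), 0;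
     -(Complex.I * (Real.cos θ : ℂ) * (Real.sin θ : ℂ)), (Real.sin θ : ℂ) ^ 2, 0;
     0, 0, 0]

/-- The generator `𝓛_θ(ρ) = (1/2) Σᵢⱼ A(θ)ᵢⱼ ([σᵢ, ρ σⱼ] + [σᵢ ρ, σⱼ])` on `M₂(ℂ)`. -/
noncomputable def genTheta (θ : ℝ) (ρ : Matrix (Fin 2) (Fin 2) ℂ) :
    Matrix (Fin 2) (Fin 2) ℂ :=
  ((1 : ℂ) / 2) • ∑ i : Fin 3, ∑ j : Fin 3, gksMatrixTheta θ i j •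
    ((pauli i * (ρ * pauli j) - ρ * pauli j * pauli i) +
      (pauli i * ρ * pauli j - pauli j * (pauli i * ρ)))

/-- The normalized Pauli basis `G₁ = 1/√2, G₂ = σ₁/√2, G₃ = σ₂/√2, G₄ = σ₃/√2` of `M₂(ℂ)`. -/
noncomputable def normPauliBasis : Fin 4 → Matrix (Fin 2) (Fin 2) ℂ :=
  ![((Real.sqrt 2 : ℂ))⁻¹ • (1 : Matrix (Fin 2) (Fin 2) ℂ),
    ((Real.sqrt 2 : ℂ))⁻¹ • pauli 0,
    ((Real.sqrt 2 : ℂ))⁻¹ • pauli 1,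
    ((Real.sqrt 2 : ℂ))⁻¹ • pauli 2]

lemma genTheta_smul (θ : ℝ) (α : ℂ) (ρ : Matrix (Fin 2) (Fin 2) ℂ) :
    genTheta θ (α • ρ) = α • genTheta θ ρ := by
  simp only [genTheta, Finset.smul_sum, smul_mul_assoc, mul_smul_comm,
    smul_sub, smul_add, smul_comm α]

lemma gen_one (θ : ℝ) : genTheta θ (1 : Matrix (Fin 2) (Fin 2) ℂ) =
    !![-4 * (Real.cos θ : ℂ) * (Real.sin θ : ℂ), 0; 0,
       4 * (Real.cos θ : ℂ) * (Real.sin θ : ℂ)] := by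
  ext i j
  fin_cases i <;> fin_cases j <;>
    simp [genTheta, gksMatrixTheta, pauli, Fin.sum_univ_succ, Matrix.mul_apply,
      Fin.sum_univ_two, Complex.ofReal_cos, Complex.ofReal_sin] <;>
    ring_nf <;> simp [Complex.I_sq] <;> ring

lemma gen_s1 (θ : ℝ) : genTheta θ (pauli 0) =
    !![0, -2 * (Real.sin θ : ℂ) ^ 2; -2 * (Real.sin θ : ℂ) ^ 2, 0] := by
  ext i j
  fin_cases i <;> fin_cases j <;>
    simp [genTheta, gksMatrixTheta, pauli, Fin.sum_univ_succ, Matrix.mul_apply,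
      Fin.sum_univ_two, Complex.ofReal_cos, Complex.ofReal_sin] <;>
    ring_nf <;> simp [Complex.I_sq] <;> ring

lemma gen_s2 (θ : ℝ) : genTheta θ (pauli 1) =
    !![0, 2 * Complex.I * (Real.cos θ : ℂ) ^ 2;
       -2 * Complex.I * (Real.cos θ : ℂ) ^ 2, 0] := by
  ext i j
  fin_cases i <;> fin_cases j <;>
    simp [genTheta, gksMatrixTheta, pauli, Fin.sum_univ_succ, Matrix.mul_apply,
      Fin.sum_univ_two, Complex.ofReal_cos, Complex.ofReal_sin] <;>
    ring_nf <;> simp [Complex.I_sq] <;> ring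

lemma gen_s3 (θ : ℝ) : genTheta θ (pauli 2) = !![-2, 0; 0, 2] := by
  have hpy : (Complex.cos θ)^2 + (Complex.sin θ)^2 = 1 := by
    rw [← Complex.ofReal_cos, ← Complex.ofReal_sin]
    norm_cast; exact Real.cos_sq_add_sin_sq θ
  ext i j
  fin_cases i <;> fin_cases j <;>
    simp [genTheta, gksMatrixTheta, pauli, Fin.sum_univ_succ, Matrix.mul_apply,
      Fin.sum_univ_two, Complex.ofReal_cos, Complex.ofReal_sin] <;>
    (first
      | ring1
      | linear_combination (-2 : ℂ) * hpy
      | linear_combination (2 : ℂ) * hpy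
      | linear_combination (4 : ℂ) * hpy
      | linear_combination (-4 : ℂ) * hpy)

/-- The matrix representation `L_{ab} = tr(G_a† 𝓛_θ(G_b))` of the
generator `𝓛_θ` in the normalized Pauli basis equals
`[[0,0,0,0],[0,−2sin²θ,0,0],[0,0,−2cos²θ,0],[−4cosθsinθ,0,0,−2]]`. -/
theorem genTheta_matrix_repr (θ : ℝ) :
    (Matrix.of fun a b : Fin 4 =>
        ((normPauliBasis a)ᴴ * genTheta θ (normPauliBasis b)).trace) =
      !![0, 0, 0, 0;
         0, -2 * (Real.sin θ : ℂ) ^ 2, 0, 0;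
         0, 0, -2 * (Real.cos θ : ℂ) ^ 2, 0;
         -4 * (Real.cos θ : ℂ) * (Real.sin θ : ℂ), 0, 0, -2] := by
  have hs2 : (((Real.sqrt 2 : ℂ))⁻¹) ^ 2 = 1 / 2 := by
    rw [inv_pow]
    norm_num [← Complex.ofReal_pow, Real.sq_sqrt]
  have key : ∀ b : Fin 4, genTheta θ (normPauliBasis b) =
      ((Real.sqrt 2 : ℂ))⁻¹ •
        ![!![-4 * (Real.cos θ : ℂ) * (Real.sin θ : ℂ), 0; 0,
             4 * (Real.cos θ : ℂ) * (Real.sin θ : ℂ)],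
          !![0, -2 * (Real.sin θ : ℂ) ^ 2; -2 * (Real.sin θ : ℂ) ^ 2, 0],
          !![0, 2 * Complex.I * (Real.cos θ : ℂ) ^ 2;
             -2 * Complex.I * (Real.cos θ : ℂ) ^ 2, 0],
          !![-2, 0; 0, 2]] b := by
    intro b
    fin_cases b <;>
      simp [normPauliBasis, genTheta_smul, gen_one, gen_s1, gen_s2, gen_s3]
  ext a b
  rw [Matrix.of_apply, key]
  fin_cases a <;> fin_cases b <;>
    simp [normPauliBasis, pauli, Matrix.trace, Matrix.mul_apply,
      Fin.sum_univ_two, Matrix.conjTranspose_apply, Matrix.one_apply] <;>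
    (try simp [Matrix.vecHead, Matrix.vecTail]) <;>
    ring_nf <;> (try simp [hs2, Complex.I_sq]) <;> (try ring_nf) <;>
    (try simp [hs2, Complex.I_sq]) <;> (try ring)
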